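/- For any two pseudodifferential operators X and Y over a commutative differential ring, the residue of the commutator [X,Y] lies in the image of the derivation D (i.e., it is a total x-derivative). -/

import Mathlib

open scoped BigOperators

namespace Paper

variable {A : Type*} [CommRing A]

/-- Generalized binomial coefficient `C(k,i) = k(k-1)⋯(k-i+1)/i!` for `k : ℤ`. -/
noncomputable def gbinom (k : ℤ) (i : ℕ) : ℤ :=
  (∏ j ∈ Finset.range i, (k - (j : ℤ))) / (i.factorial : ℤ)

/-- Multiplication of pseudodifferential operators, given by their coefficient
functions `ℤ → A`, with `∂^k f = Σ_{l≥0} C(k,l) D^l(f) ∂^(k-l)`. -/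
noncomputable def pmul (D : A → A) (X Y : ℤ → A) : ℤ → A :=
  fun k => ∑ᶠ i : ℤ, ∑ᶠ l : ℕ, X i * (gbinom i l • D^[l] (Y (k + (l : ℤ) - i)))

/-- The residue: the coefficient of `∂⁻¹`. -/
def res (X : ℤ → A) : A := X (-1)

/-- The nonnegative-order (differential-operator) part. -/
def pplus (X : ℤ → A) : ℤ → A := fun i => if 0 ≤ i then X i else 0

/-- The strictly negative-order part. -/
def pminus (X : ℤ → A) : ℤ → A := fun i => if i < 0 then X i else 0

/-- Boundedness of the order: coefficients vanish above some `M`. -/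
def Bdd (X : ℤ → A) : Prop := ∃ M : ℤ, ∀ i : ℤ, M < i → X i = 0

/-- Commutator of pseudodifferential operators. -/
noncomputable def pcomm (D : A → A) (X Y : ℤ → A) : ℤ → A :=
  pmul D X Y - pmul D Y X

/-- The identity operator. -/
def pone : ℤ → A := fun i => if i = 0 then 1 else 0

/-- The single-term operator `s ∂^m`. -/
def psingle (m : ℤ) (s : A) : ℤ → A := fun i => if i = m then s else 0

/-- Powers of a pseudodifferential operator. -/
noncomputable def ppow (D : A → A) (X : ℤ → A) : ℕ → ℤ → A
  | 0 => pone
  | n + 1 => pmul D X (ppow D X n)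

/-- `D` is a derivation: additive and Leibniz. -/
def IsDeriv (D : A → A) : Prop :=
  (∀ a b : A, D (a + b) = D a + D b) ∧ ∀ a b : A, D (a * b) = D a * b + a * D b

/-- Nonnegative part of `L^n`. -/
noncomputable def Lplus (D : A → A) (L : ℤ → A) (n : ℕ) : ℤ → A := pplus (ppow D L n)

/-- Strictly negative part of `L^n`. -/
noncomputable def Lminus (D : A → A) (L : ℤ → A) (n : ℕ) : ℤ → A := pminus (ppow D L n)

/-!
Writing `Y' = Y_{-1+l-i}`, the residue of `XY` is `Σ_{i,l} C(i,l) X_i D^l(Y')`. Reindexing the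
residue of `YX` by `(i, l) ↦ (-1 + l - i, l)` and using the reflection
`C(-1 + l - i, l) = (-1)^l C(i, l)` puts it in the same shape, so the residue of `[X, Y]` is
`Σ_{i,l} C(i,l) (X_i D^l(Y') - (-1)^l Y' D^l(X_i))`. Each summand is a total derivative by
iterated integration by parts, and the sum is finite because `X` and `Y` are bounded.
-/

lemma gbinom_eq_choose (k : ℤ) (l : ℕ) : gbinom k l = Ring.choose k l := by
  have h := Ring.descPochhammer_eq_factorial_smul_choose k l
  rw [← Polynomial.eval_eq_smeval, descPochhammer_eval_eq_prod_range, nsmul_eq_mul] at h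
  rw [gbinom, h, Int.mul_ediv_cancel_left _ (by positivity)]

lemma gbinom_neg_one_add_sub (i : ℤ) (l : ℕ) :
    gbinom (-1 + l - i) l = (-1) ^ l * gbinom i l := by
  rw [gbinom_eq_choose, gbinom_eq_choose, show -1 + (l : ℤ) - i = -(i + 1 - l) by ring,
    Ring.choose_neg, show i + 1 - l + l - 1 = i by ring, Units.smul_def,
    Int.coe_negOnePow_natCast, smul_eq_mul]

namespace IsDeriv

variable {D : A → A}

lemma map_zero (hD : IsDeriv D) : D 0 = 0 := (AddMonoidHom.mk' D hD.1).map_zero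

lemma mul_iterate_sub_mem_range (hD : IsDeriv D) (l : ℕ) (f g : A) :
    f * D^[l] g - (-1) ^ l * (g * D^[l] f) ∈ (AddMonoidHom.mk' D hD.1).range := by
  induction l generalizing f with
  | zero => simp [mul_comm]
  | succ l ih =>
    have hstep : f * D^[l + 1] g - (-1) ^ (l + 1) * (g * D^[l + 1] f)
        = D (f * D^[l] g) - (D f * D^[l] g - (-1) ^ l * (g * D^[l] (D f))) := by
      rw [Function.iterate_succ_apply' D l g, Function.iterate_succ_apply D l f, hD.2]
      ring
    rw [hstep]
    exact sub_mem ⟨f * D^[l] g, rfl⟩ (ih (D f))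

end IsDeriv

noncomputable def pmulTerm (D : A → A) (X Y : ℤ → A) (k : ℤ) (p : ℤ × ℕ) : A :=
  X p.1 * (gbinom p.1 p.2 • D^[p.2] (Y (k + p.2 - p.1)))

/-- Matches the summands of `res (Y X)` with those of `res (X Y)`. -/
def resReflect : Equiv.Perm (ℤ × ℕ) :=
  Function.Involutive.toPerm (fun p => (-1 + p.2 - p.1, p.2)) fun p => by simp

lemma resReflect_apply (p : ℤ × ℕ) : resReflect p = (-1 + p.2 - p.1, p.2) := rfl

section Residue

variable {D : A → A} {X Y : ℤ → A}

lemma hasFiniteSupport_pmulTerm (hD0 : D 0 = 0) (hX : Bdd X) (hY : Bdd Y) (k : ℤ) :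
    (pmulTerm D X Y k).HasFiniteSupport := by
  obtain ⟨M, hM⟩ := hX
  obtain ⟨N, hN⟩ := hY
  refine (Finset.Icc (k - N) M ×ˢ Finset.range (M + N - k + 1).toNat).finite_toSet.subset ?_
  rintro ⟨i, l⟩ hp
  have hi : i ≤ M := by
    by_contra h
    simp [pmulTerm, hM i (by omega)] at hp
  have hl : k + l - i ≤ N := by
    by_contra h
    simp [pmulTerm, hN (k + l - i) (by omega), Function.iterate_fixed hD0 l] at hp
  simp only [Finset.coe_product, Finset.coe_Icc, Finset.coe_range, Set.mem_prod, Set.mem_Icc,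
    Set.mem_Iio]
  omega

lemma pmul_eq_finsum_pmulTerm (hD0 : D 0 = 0) (hX : Bdd X) (hY : Bdd Y) (k : ℤ) :
    pmul D X Y k = ∑ᶠ p, pmulTerm D X Y k p :=
  (finsum_curry _ (hasFiniteSupport_pmulTerm hD0 hX hY k)).symm

lemma pmulTerm_sub_pmulTerm_resReflect (p : ℤ × ℕ) :
    pmulTerm D X Y (-1) p - pmulTerm D Y X (-1) (resReflect p) =
      gbinom p.1 p.2 • (X p.1 * D^[p.2] (Y (-1 + p.2 - p.1))
        - (-1) ^ p.2 * (Y (-1 + p.2 - p.1) * D^[p.2] (X p.1))) := by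
  simp only [pmulTerm, resReflect_apply, sub_sub_cancel, gbinom_neg_one_add_sub, zsmul_eq_mul]
  push_cast
  ring

lemma res_pcomm_eq_finsum (hD0 : D 0 = 0) (hX : Bdd X) (hY : Bdd Y) :
    res (pcomm D X Y) = ∑ᶠ p, (pmulTerm D X Y (-1) p - pmulTerm D Y X (-1) (resReflect p)) := by
  rw [res, pcomm, Pi.sub_apply, pmul_eq_finsum_pmulTerm hD0 hX hY,
    pmul_eq_finsum_pmulTerm hD0 hY hX, ← finsum_comp_equiv resReflect (f := pmulTerm D Y X (-1))]
  exact (finsum_sub_distrib (hasFiniteSupport_pmulTerm hD0 hX hY _)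
    ((hasFiniteSupport_pmulTerm hD0 hY hX _).comp_of_injective resReflect.injective)).symm

end Residue

/-- For any two pseudodifferential operators `X` and `Y` over a commutative
differential ring, the residue of the commutator `[X,Y]` is a total derivative. -/
theorem stmt4 {A : Type*} [CommRing A] (D : A → A) (hD : IsDeriv D)
    (X Y : ℤ → A) (hX : Bdd X) (hY : Bdd Y) :
    res (pcomm D X Y) ∈ Set.range D := by
  rw [res_pcomm_eq_finsum hD.map_zero hX hY]
  refine AddMonoidHom.mem_range.mp <| finsum_induction (· ∈ (AddMonoidHom.mk' D hD.1).range)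
    (zero_mem _) (fun _ _ => add_mem) fun p => ?_
  rw [pmulTerm_sub_pmulTerm_resReflect]
  exact zsmul_mem (hD.mul_iterate_sub_mem_range _ _ _) _

end Paper
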